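/- arXiv:1209.3523 — 2 statements merged into one kernel-verified Lean document; each statement's English description precedes it below -/
import Mathlib

section
/- Let F be a spanning tree of G of minimum c-length and let J be a (T_F △ T)-join of minimum c-length. Then the multiset F + J (summing multiplicities) is a T-tour of G and c(F) + c(J) ≤ (5/3)·opt(G,T,c). In particular the Christofides-type algorithm is a 5/3-approximation for the T-tour problem. -/
open scoped Classical
open Finset

noncomputable section

variable {V : Type*} [Fintype V] [DecidableEq V]

/-- The edge set of a graph as a `Finset` of `Sym2 V`. -/
def edgesOf (G : SimpleGraph V) : Finset (Sym2 V) :=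
  Finset.univ.filter (fun e => e ∈ G.edgeSet)

/-- Degree of a vertex in a set of edges. -/
def degOn (J : Finset (Sym2 V)) (v : V) : ℕ :=
  (J.filter (fun e => v ∈ e)).card

/-- The set of vertices of odd degree in a set of edges. -/
def oddVerts (J : Finset (Sym2 V)) : Finset V :=
  Finset.univ.filter (fun v => Odd (degOn J v))

/-- `J` is a `T`-join of `G`: a set of edges of `G` whose odd-degree vertex set is `T`. -/
def IsTJoin (G : SimpleGraph V) (T : Finset V) (J : Finset (Sym2 V)) : Prop :=
  J ⊆ edgesOf G ∧ oddVerts J = T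

/-- `F` is a spanning tree of `G`: edges of `G`, connected, with `|V| - 1` edges. -/
def IsSpanningTree (G : SimpleGraph V) (F : Finset (Sym2 V)) : Prop :=
  F ⊆ edgesOf G ∧ (SimpleGraph.fromEdgeSet (F : Set (Sym2 V))).Connected ∧
    F.card + 1 = Fintype.card V

/-- δ(W): the set of edges of `G` with exactly one endpoint in `W`. -/
def cutEdges (G : SimpleGraph V) (W : Finset V) : Finset (Sym2 V) :=
  (edgesOf G).filter (fun e => ∃ u v, e = s(u, v) ∧ u ∈ W ∧ v ∉ W)

/-- `𝒲` is a partition of the vertex set `V`. -/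
def IsPartitionOf (𝒲 : Finset (Finset V)) : Prop :=
  (∀ W ∈ 𝒲, W.Nonempty) ∧
  (∀ W₁ ∈ 𝒲, ∀ W₂ ∈ 𝒲, W₁ ≠ W₂ → Disjoint W₁ W₂) ∧
  (∀ v : V, ∃ W ∈ 𝒲, v ∈ W)

/-- δ(𝒲): the set of edges of `G` whose endpoints lie in different classes of `𝒲`. -/
def partitionCut (G : SimpleGraph V) (𝒲 : Finset (Finset V)) : Finset (Sym2 V) :=
  (edgesOf G).filter (fun e => ¬ ∃ W ∈ 𝒲, ∀ v ∈ e, v ∈ W)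

/-- `x(A) = Σ_{e ∈ A} x(e)`. -/
def xval (x : Sym2 V → ℝ) (A : Finset (Sym2 V)) : ℝ := ∑ e ∈ A, x e

/-- `cᵀx`, summed over the edges of `G`. -/
def dotE (G : SimpleGraph V) (c x : Sym2 V → ℝ) : ℝ := ∑ e ∈ edgesOf G, c e * x e

/-- Membership in the polyhedron `P(G,T)`. -/
def memP (G : SimpleGraph V) (T : Finset V) (x : Sym2 V → ℝ) : Prop :=
  (∀ W : Finset V, W.Nonempty → W ≠ Finset.univ → Even ((W ∩ T).card) →
      2 ≤ xval x (cutEdges G W)) ∧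
  (∀ 𝒲 : Finset (Finset V), IsPartitionOf 𝒲 →
      (𝒲.card : ℝ) - 1 ≤ xval x (partitionCut G 𝒲)) ∧
  (∀ e ∈ edgesOf G, 0 ≤ x e ∧ x e ≤ 2)

/-- `m` (an edge multiplicity vector, values in `{0,1,2}`) is a `T`-tour of `G`:
its support consists of edges of `G`, the support spans a connected graph on `V`,
and the vertices of odd degree (with multiplicities) are exactly `T`. -/
def IsTTour (G : SimpleGraph V) (T : Finset V) (m : Sym2 V → ℕ) : Prop :=
  (∀ e, 0 < m e → e ∈ G.edgeSet) ∧ (∀ e, m e ≤ 2) ∧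
  (SimpleGraph.fromEdgeSet {e | 0 < m e}).Connected ∧
  (∀ v : V, (Odd (∑ e ∈ edgesOf G, if v ∈ e then m e else 0) ↔ v ∈ T))

/-- The `c`-length of a multiset of edges given by multiplicities `m`. -/
def tourCost (G : SimpleGraph V) (c : Sym2 V → ℝ) (m : Sym2 V → ℕ) : ℝ :=
  ∑ e ∈ edgesOf G, (m e : ℝ) * c e

/-- `opt(G,T,c)`: the minimum `c`-length of a `T`-tour. -/
def optLen (G : SimpleGraph V) (T : Finset V) (c : Sym2 V → ℝ) : ℝ :=
  sInf {L : ℝ | ∃ m, IsTTour G T m ∧ L = tourCost G c m}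

/-- The `c`-length of a set of edges. -/
def setCost (c : Sym2 V → ℝ) (J : Finset (Sym2 V)) : ℝ := ∑ e ∈ J, c e

/-- `τ(G,T',c)`: the minimum `c`-length of a `T'`-join. -/
def tau (G : SimpleGraph V) (T' : Finset V) (c : Sym2 V → ℝ) : ℝ :=
  sInf {L : ℝ | ∃ J, IsTJoin G T' J ∧ L = setCost c J}

/-- Membership in `Q₊(G,T')`: nonnegative and at least `1` on every `T'`-cut. -/
def memQplus (G : SimpleGraph V) (T' : Finset V) (x : Sym2 V → ℝ) : Prop :=
  (∀ e ∈ edgesOf G, 0 ≤ x e) ∧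
  (∀ W : Finset V, W.Nonempty → W ≠ Finset.univ → Odd ((W ∩ T').card) →
      1 ≤ xval x (cutEdges G W))

/-- Symmetric difference of two finite sets. -/
def symDiff (A B : Finset V) : Finset V := (A \ B) ∪ (B \ A)

/-- `p*(e) = Σ_{F ∈ 𝓕, e ∈ F(T)} λ_F`, where `JT F` plays the role of `F(T)`. -/
def pstar (𝓕 : Finset (Finset (Sym2 V))) (lam : Finset (Sym2 V) → ℝ)
    (JT : Finset (Sym2 V) → Finset (Sym2 V)) (e : Sym2 V) : ℝ :=
  ∑ F ∈ 𝓕.filter (fun F => e ∈ JT F), lam F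

/-- `q*(e) = Σ_{F ∈ 𝓕, e ∈ F ∖ F(T)} λ_F`. -/
def qstar (𝓕 : Finset (Finset (Sym2 V))) (lam : Finset (Sym2 V) → ℝ)
    (JT : Finset (Sym2 V) → Finset (Sym2 V)) (e : Sym2 V) : ℝ :=
  ∑ F ∈ 𝓕.filter (fun F => e ∈ F \ JT F), lam F

/-- `𝒬`: the family of cuts `Q` of `G` (as edge sets) with `x*(Q) < 2`. -/
def Qset (G : SimpleGraph V) (xstar : Sym2 V → ℝ) : Finset (Finset (Sym2 V)) :=
  Finset.univ.filter (fun C : Finset (Sym2 V) =>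
    (∃ W : Finset V, W.Nonempty ∧ W ≠ Finset.univ ∧ C = cutEdges G W) ∧ xval xstar C < 2)

/-- `x^Q(e) = Σ_{F ∈ 𝓕, Q ∩ F = {e}} λ_F`. -/
def xQ (𝓕 : Finset (Finset (Sym2 V))) (lam : Finset (Sym2 V) → ℝ)
    (C : Finset (Sym2 V)) (e : Sym2 V) : ℝ :=
  ∑ F ∈ 𝓕.filter (fun F => C ∩ F = {e}), lam F

/-- `f^Q(β) = max {0, (4β - 1 - β x*(Q)) / (2 - x*(Q))}`. -/
def fQ (xstar : Sym2 V → ℝ) (β : ℝ) (C : Finset (Sym2 V)) : ℝ :=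
  max 0 ((4 * β - 1 - β * xval xstar C) / (2 - xval xstar C))

/-- `s^F(β) = Σ_{Q ∈ 𝒬, |Q ∩ F| ≥ 2} f^Q(β) x^Q`. -/
def sF (G : SimpleGraph V) (xstar : Sym2 V → ℝ) (𝓕 : Finset (Finset (Sym2 V)))
    (lam : Finset (Sym2 V) → ℝ) (β : ℝ) (F : Finset (Sym2 V)) (e : Sym2 V) : ℝ :=
  ∑ C ∈ (Qset G xstar).filter (fun C => 2 ≤ (C ∩ F).card), fQ xstar β C * xQ 𝓕 lam C e

end

/-!
Let `m` be any `T`-tour and `S = T_F △ T`. The support of `m` is connected, so it contains a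
spanning tree, whence `c(F) ≤ c(m)`, and an `S`-join `E`. The tree `F` contains an `S`-join `P`,
and `K = F \ P` is a `T`-join. Reducing the multiset `m + K + E` modulo 2 gives an `S`-join `J'`
with `c(J') + c(E) ≤ c(m) + c(K)`. Minimality of `J` against `P`, `E` and `J'` gives
`3 c(J) ≤ c(P) + c(m) + c(K) = c(m) + c(F) ≤ 2 c(m)`, so `c(F) + c(J) ≤ 5/3 c(m)`.
-/

section

open SimpleGraph
open scoped symmDiff

variable {V : Type*} [DecidableEq V]

def edgeCount (J : Finset (Sym2 V)) (e : Sym2 V) : ℕ := if e ∈ J then 1 else 0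

def multiDegree (E : Finset (Sym2 V)) (m : Sym2 V → ℕ) (v : V) : ℕ :=
  ∑ e ∈ E, if v ∈ e then m e else 0

lemma symDiff_eq_symmDiff (A B : Finset V) : symDiff A B = A ∆ B := rfl

lemma multiDegree_add (E : Finset (Sym2 V)) (m m' : Sym2 V → ℕ) (v : V) :
    multiDegree E (m + m') v = multiDegree E m v + multiDegree E m' v := by
  simp only [multiDegree, ← sum_add_distrib]
  refine sum_congr rfl fun e _ => ?_
  split_ifs <;> simp

lemma multiDegree_edgeCount {E J : Finset (Sym2 V)} (hJ : J ⊆ E) (v : V) :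
    multiDegree E (edgeCount J) v = degOn J v := by
  rw [multiDegree, degOn, card_filter, ← sum_subset hJ fun e _ he => by simp [edgeCount, he]]
  exact sum_congr rfl fun e he => by simp [edgeCount, he]

variable [Fintype V]

@[simp]
lemma mem_oddVerts {J : Finset (Sym2 V)} {v : V} : v ∈ oddVerts J ↔ Odd (degOn J v) := by
  simp [oddVerts]

@[simp]
lemma oddVerts_empty : oddVerts (∅ : Finset (Sym2 V)) = ∅ := by
  ext
  simp [degOn]

lemma mem_oddVerts_filter_odd (E : Finset (Sym2 V)) (m : Sym2 V → ℕ) (v : V) :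
    v ∈ oddVerts (E.filter fun e => Odd (m e)) ↔ Odd (multiDegree E m v) := by
  have hmod : degOn (E.filter fun e => Odd (m e)) v % 2 = multiDegree E m v % 2 := by
    rw [degOn, card_filter, sum_filter, multiDegree]
    refine Nat.ModEq.sum fun e _ => ?_
    by_cases hv : v ∈ e <;> by_cases h : Odd (m e) <;>
      simp only [Nat.ModEq, hv, h, if_true, if_false] <;> rw [Nat.odd_iff] at h <;> omega
  rw [mem_oddVerts, Nat.odd_iff, Nat.odd_iff, hmod]

lemma oddVerts_symmDiff (A B : Finset (Sym2 V)) :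
    oddVerts (A ∆ B) = oddVerts A ∆ oddVerts B := by
  have hAB : A ∆ B = (A ∪ B).filter fun e => Odd ((edgeCount A + edgeCount B) e) := by
    ext e
    rw [mem_filter, mem_symmDiff, mem_union, Pi.add_apply, edgeCount, edgeCount]
    by_cases hA : e ∈ A <;> by_cases hB : e ∈ B <;> simp [hA, hB]
  ext v
  rw [hAB, mem_oddVerts_filter_odd, multiDegree_add, multiDegree_edgeCount subset_union_left,
    multiDegree_edgeCount subset_union_right, Nat.odd_add, mem_symmDiff, mem_oddVerts,
    mem_oddVerts, ← Nat.not_odd_iff_even]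
  tauto

lemma oddVerts_singleton {a b : V} (hab : a ≠ b) :
    oddVerts ({s(a, b)} : Finset (Sym2 V)) = {a} ∆ {b} := by
  ext v
  by_cases ha : v = a <;> by_cases hb : v = b <;>
    simp_all [degOn, filter_singleton, mem_symmDiff]

lemma degOn_eq_degree {J : Finset (Sym2 V)} (hJ : ∀ e ∈ J, ¬ e.IsDiag) (v : V) :
    degOn J v = (fromEdgeSet (J : Set (Sym2 V))).degree v := by
  rw [← card_incidenceFinset_eq_degree, incidenceFinset_eq_filter, degOn]
  congr 1
  ext e
  simp only [mem_filter, mem_edgeFinset, edgeSet_fromEdgeSet, Set.mem_sdiff, mem_coe]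
  exact ⟨fun ⟨h, hv⟩ => ⟨⟨h, hJ e h⟩, hv⟩, fun ⟨⟨h, _⟩, hv⟩ => ⟨h, hv⟩⟩

lemma even_card_oddVerts {J : Finset (Sym2 V)} (hJ : ∀ e ∈ J, ¬ e.IsDiag) :
    Even (oddVerts J).card := by
  convert (fromEdgeSet (J : Set (Sym2 V))).even_card_odd_degree_vertices using 2
  simp only [oddVerts, degOn_eq_degree hJ]

lemma IsTJoin.even_card {G : SimpleGraph V} {S : Finset V} {J : Finset (Sym2 V)}
    (hJ : IsTJoin G S J) : Even S.card :=
  hJ.2 ▸ even_card_oddVerts fun e he =>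
    not_isDiag_of_mem_edgeSet G (by simpa [edgesOf] using hJ.1 he)

lemma exists_subset_oddVerts_eq_pair {E : Finset (Sym2 V)} {u v : V}
    (p : (fromEdgeSet (E : Set (Sym2 V))).Walk u v) : ∃ P ⊆ E, oddVerts P = {u} ∆ {v} := by
  induction p with
  | nil => exact ⟨∅, empty_subset _, by simp⟩
  | @cons a b c hab _ ih =>
    obtain ⟨P, hPE, hP⟩ := ih
    rw [fromEdgeSet_adj] at hab
    refine ⟨{s(a, b)} ∆ P, symmDiff_subset_union.trans (union_subset (by simpa using hab.1) hPE), ?_⟩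
    rw [oddVerts_symmDiff, oddVerts_singleton hab.2, hP, symmDiff_assoc,
      symmDiff_symmDiff_cancel_left]

lemma exists_subset_oddVerts_eq {E : Finset (Sym2 V)}
    (hE : (fromEdgeSet (E : Set (Sym2 V))).Preconnected) {X : Finset V} (hX : Even X.card) :
    ∃ P ⊆ E, oddVerts P = X := by
  induction X using Finset.strongInduction with
  | _ X ih =>
  obtain rfl | ⟨u, hu⟩ := X.eq_empty_or_nonempty
  · exact ⟨∅, empty_subset _, oddVerts_empty⟩
  obtain ⟨v, hv⟩ : (X.erase u).Nonempty := by
    rw [← card_pos, card_erase_of_mem hu]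
    have := card_pos.2 ⟨u, hu⟩
    obtain ⟨k, hk⟩ := hX
    omega
  have hvu := ne_of_mem_erase hv
  have hD : ({u} ∆ {v} : Finset V) = {u, v} := by
    rw [symmDiff_eq_union (disjoint_singleton.2 hvu.symm), insert_eq]
  have hDX : {u, v} ⊆ X := insert_subset hu (singleton_subset_iff.2 (mem_of_mem_erase hv))
  have hcard : (X \ {u, v}).card + 2 = X.card := by
    rw [card_sdiff_of_subset hDX, card_pair hvu.symm]
    exact Nat.sub_add_cancel (card_pair hvu.symm ▸ card_le_card hDX)
  obtain ⟨P, hPE, hP⟩ := ih (X \ {u, v}) (sdiff_ssubset hDX (insert_nonempty _ _))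
    (by rw [Nat.even_iff] at hX ⊢; omega)
  obtain ⟨Q, hQE, hQ⟩ := exists_subset_oddVerts_eq_pair (hE u v).some
  refine ⟨P ∆ Q, symmDiff_subset_union.trans (union_subset hPE hQE), ?_⟩
  rw [oddVerts_symmDiff, hP, hQ, hD, sdiff_symmDiff_eq_sup, sup_eq_left.2 hDX]

omit [DecidableEq V] in
lemma exists_isSpanningTree_subset {G : SimpleGraph V} {E : Finset (Sym2 V)}
    (hEG : E ⊆ edgesOf G) (hE : (fromEdgeSet (E : Set (Sym2 V))).Connected) :
    ∃ F ⊆ E, IsSpanningTree G F := by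
  obtain ⟨H, hHE, hH⟩ := hE.exists_isTree_le
  have hsub : H.edgeFinset ⊆ E := fun e he =>
    (edgeSet_fromEdgeSet _ ▸ edgeSet_mono hHE (mem_edgeFinset.1 he)).1
  refine ⟨H.edgeFinset, hsub, hsub.trans hEG, ?_, hH.card_edgeFinset⟩
  rw [coe_edgeFinset, fromEdgeSet_edgeSet]
  exact hH.connected

section Cost

variable (G : SimpleGraph V) (c : Sym2 V → ℝ)

omit [DecidableEq V] in
lemma tourCost_add (m m' : Sym2 V → ℕ) :
    tourCost G c (m + m') = tourCost G c m + tourCost G c m' := by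
  simp only [tourCost, Pi.add_apply, Nat.cast_add, add_mul, sum_add_distrib]

lemma tourCost_edgeCount {J : Finset (Sym2 V)} (hJ : J ⊆ edgesOf G) :
    tourCost G c (edgeCount J) = setCost c J := by
  rw [tourCost, setCost, ← sum_subset hJ fun e _ he => by simp [edgeCount, he]]
  exact sum_congr rfl fun e he => by simp [edgeCount, he]

variable {G c}

omit [DecidableEq V] in
lemma tourCost_mono (hc : ∀ e, 0 ≤ c e) {m m' : Sym2 V → ℕ}
    (h : ∀ e ∈ edgesOf G, m e ≤ m' e) : tourCost G c m ≤ tourCost G c m' :=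
  sum_le_sum fun e he => mul_le_mul_of_nonneg_right (by exact_mod_cast h e he) (hc e)

end Cost

noncomputable def tourSupport (G : SimpleGraph V) (m : Sym2 V → ℕ) : Finset (Sym2 V) :=
  (edgesOf G).filter fun e => 0 < m e

lemma connected_fromEdgeSet_tourSupport {G : SimpleGraph V} {T : Finset V} {m : Sym2 V → ℕ}
    (hm : IsTTour G T m) : (fromEdgeSet (tourSupport G m : Set (Sym2 V))).Connected := by
  convert hm.2.2.1 using 2
  ext e
  simpa [tourSupport, edgesOf] using hm.1 e

variable {G : SimpleGraph V} {T : Finset V} {c : Sym2 V → ℝ}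

lemma setCost_le_tourCost_of_minimal (hc : ∀ e, 0 ≤ c e) {F : Finset (Sym2 V)}
    (hFmin : ∀ F', IsSpanningTree G F' → setCost c F ≤ setCost c F')
    {m : Sym2 V → ℕ} (hm : IsTTour G T m) : setCost c F ≤ tourCost G c m := by
  obtain ⟨F', hF'm, hF'⟩ :=
    exists_isSpanningTree_subset (filter_subset _ _) (connected_fromEdgeSet_tourSupport hm)
  calc setCost c F ≤ setCost c F' := hFmin F' hF'
    _ ≤ setCost c (tourSupport G m) := sum_le_sum_of_subset_of_nonneg hF'm fun e _ _ => hc e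
    _ = tourCost G c (edgeCount (tourSupport G m)) :=
      (tourCost_edgeCount G c (filter_subset _ _)).symm
    _ ≤ tourCost G c m := tourCost_mono hc fun e _ => by
      unfold edgeCount tourSupport
      split_ifs with h
      · exact (mem_filter.1 h).2
      · exact Nat.zero_le _

lemma two_mul_setCost_le_of_isTTour (hc : ∀ e, 0 ≤ c e) {S : Finset V} {J K : Finset (Sym2 V)}
    (hJ : IsTJoin G S J) (hJmin : ∀ J', IsTJoin G S J' → setCost c J ≤ setCost c J')
    {m : Sym2 V → ℕ} (hm : IsTTour G T m) (hK : IsTJoin G T K) :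
    2 * setCost c J ≤ tourCost G c m + setCost c K := by
  obtain ⟨E, hEm, hE⟩ :=
    exists_subset_oddVerts_eq (connected_fromEdgeSet_tourSupport hm).preconnected hJ.even_card
  have hEG : E ⊆ edgesOf G := hEm.trans (filter_subset _ _)
  set n := m + edgeCount K + edgeCount E
  set J' := (edgesOf G).filter fun e => Odd (n e)
  have hJ' : IsTJoin G S J' := by
    refine ⟨filter_subset _ _, ?_⟩
    ext v
    have hmv := hm.2.2.2 v
    have hKv : Odd (degOn K v) ↔ v ∈ T := hK.2 ▸ mem_oddVerts.symm
    have hEv : Odd (degOn E v) ↔ v ∈ S := hE ▸ mem_oddVerts.symm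
    rw [mem_oddVerts_filter_odd, multiDegree_add, multiDegree_add,
      multiDegree_edgeCount hK.1, multiDegree_edgeCount hEG, Nat.odd_add, Nat.odd_add,
      ← Nat.not_odd_iff_even, ← Nat.not_odd_iff_even]
    tauto
  have hcost : setCost c J' + setCost c E ≤ tourCost G c m + setCost c K := by
    rw [← tourCost_edgeCount G c (filter_subset _ _), ← tourCost_edgeCount G c hEG,
      ← tourCost_edgeCount G c hK.1, ← tourCost_add, ← tourCost_add]
    refine tourCost_mono hc fun e he => ?_
    have hpos : e ∈ E → 0 < m e := fun h => (mem_filter.1 (hEm h)).2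
    simp only [Pi.add_apply, edgeCount, n]
    split_ifs at hpos ⊢ <;> simp_all [Nat.odd_iff] <;> omega
  linarith [hJmin J' hJ', hJmin E ⟨hEG, hE⟩]

lemma exists_isTJoin_setCost_add_le {F J : Finset (Sym2 V)} (hF : IsSpanningTree G F)
    (hJ : IsTJoin G (symDiff (oddVerts F) T) J)
    (hJmin : ∀ J', IsTJoin G (symDiff (oddVerts F) T) J' → setCost c J ≤ setCost c J') :
    ∃ K, IsTJoin G T K ∧ setCost c K + setCost c J ≤ setCost c F := by
  obtain ⟨P, hPF, hP⟩ := exists_subset_oddVerts_eq hF.2.1.preconnected hJ.even_card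
  refine ⟨F \ P, ⟨sdiff_subset.trans hF.1, ?_⟩, ?_⟩
  · rw [← symmDiff_of_ge hPF, oddVerts_symmDiff, hP, symDiff_eq_symmDiff,
      symmDiff_symmDiff_cancel_left]
  · have hsplit : setCost c (F \ P) + setCost c P = setCost c F := sum_sdiff hPF
    linarith [hJmin P ⟨hPF.trans hF.1, hP⟩]

lemma isTTour_edgeCount_add {F J : Finset (Sym2 V)} (hF : IsSpanningTree G F)
    (hJ : IsTJoin G (symDiff (oddVerts F) T) J) :
    IsTTour G T (edgeCount F + edgeCount J) := by
  refine ⟨fun e he => ?_, fun e => ?_, ?_, fun v => ?_⟩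
  · have : e ∈ F ∨ e ∈ J := by by_contra! h; simp [edgeCount, h] at he
    simpa [edgesOf] using this.elim (fun h => hF.1 h) (fun h => hJ.1 h)
  · simp only [Pi.add_apply, edgeCount]; split_ifs <;> omega
  · refine hF.2.1.mono (fromEdgeSet_mono fun e he => ?_)
    simp [edgeCount, show e ∈ F from he]
  · change Odd (multiDegree _ _ v) ↔ _
    have hJv : Odd (degOn J v) ↔ v ∈ symDiff (oddVerts F) T := hJ.2 ▸ mem_oddVerts.symm
    rw [multiDegree_add, multiDegree_edgeCount hF.1, multiDegree_edgeCount hJ.1, Nat.odd_add,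
      ← Nat.not_odd_iff_even, hJv, symDiff_eq_symmDiff, mem_symmDiff, mem_oddVerts]
    tauto

end

theorem stmt5_general {V : Type*} [Fintype V] [DecidableEq V]
    (G : SimpleGraph V)
    (T : Finset V)
    (c : Sym2 V → ℝ) (hc : ∀ e, 0 ≤ c e)
    (F : Finset (Sym2 V)) (hF : IsSpanningTree G F)
    (hFmin : ∀ F' : Finset (Sym2 V), IsSpanningTree G F' → setCost c F ≤ setCost c F')
    (J : Finset (Sym2 V)) (hJ : IsTJoin G (symDiff (oddVerts F) T) J)
    (hJmin : ∀ J' : Finset (Sym2 V), IsTJoin G (symDiff (oddVerts F) T) J' →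
      setCost c J ≤ setCost c J') :
    IsTTour G T (fun e => (if e ∈ F then 1 else 0) + (if e ∈ J then 1 else 0)) ∧
    setCost c F + setCost c J ≤ (5 / 3) * optLen G T c := by
  have htour : IsTTour G T (edgeCount F + edgeCount J) := isTTour_edgeCount_add hF hJ
  refine ⟨htour, ?_⟩
  obtain ⟨K, hK, hKJ⟩ := exists_isTJoin_setCost_add_le (c := c) hF hJ hJmin
  have hopt : 3 / 5 * (setCost c F + setCost c J) ≤ optLen G T c := by
    refine le_csInf ⟨_, _, htour, rfl⟩ ?_
    rintro _ ⟨m, hm, rfl⟩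
    linarith [setCost_le_tourCost_of_minimal hc hFmin hm,
      two_mul_setCost_le_of_isTTour hc hJ hJmin hm hK]
  linarith

/-- Christofides-type algorithm: for a minimum spanning tree `F` and a
minimum `(T_F △ T)`-join `J`, the multiset `F + J` is a `T`-tour of length at most
`(5/3) opt(G,T,c)`. -/
theorem stmt5 {V : Type*} [Fintype V] [DecidableEq V]
    (G : SimpleGraph V) (hG : G.Connected)
    (T : Finset V) (hT : Even T.card)
    (c : Sym2 V → ℝ) (hc : ∀ e, 0 ≤ c e)
    (F : Finset (Sym2 V)) (hF : IsSpanningTree G F)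
    (hFmin : ∀ F' : Finset (Sym2 V), IsSpanningTree G F' → setCost c F ≤ setCost c F')
    (J : Finset (Sym2 V)) (hJ : IsTJoin G (symDiff (oddVerts F) T) J)
    (hJmin : ∀ J' : Finset (Sym2 V), IsTJoin G (symDiff (oddVerts F) T) J' →
      setCost c J ≤ setCost c J') :
    IsTTour G T (fun e => (if e ∈ F then 1 else 0) + (if e ∈ J then 1 else 0)) ∧
    setCost c F + setCost c J ≤ (5 / 3) * optLen G T c :=
  stmt5_general G T c hc F hF hFmin J hJ hJmin
end

section
/- For every β ∈ (1/3, 1/2) and every F ∈ ℱ_{>0}, the vector β·x* + (1 − 2β)·χ_F + s^F(β) lies in Q_+(G, T_F △ T); that is, it is nonnegative and every (T_F △ T)-cut C satisfies β·x*(C) + (1 − 2β)·|C ∩ F| + s^F(β)(C) ≥ 1. -/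
open scoped Classical
open Finset

section Aux
variable {V : Type*} [Fintype V] [DecidableEq V]

lemma natCast_zmod_two (n : ℕ) : (n : ZMod 2) = if Odd n then 1 else 0 := by
  rw [← ZMod.natCast_mod n 2]
  rcases Nat.even_or_odd n with h | h
  · rw [Nat.even_iff.1 h]; simp [Nat.not_odd_iff_even.2 h]
  · rw [Nat.odd_iff.1 h]; simp [h]

lemma odd_iff_cast (n : ℕ) : Odd n ↔ (n : ZMod 2) = 1 := by
  rw [natCast_zmod_two]; by_cases h : Odd n <;> simp [h] <;> decide

lemma even_iff_cast (n : ℕ) : Even n ↔ (n : ZMod 2) = 0 := by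
  rw [natCast_zmod_two]
  by_cases h : Odd n
  · simp only [h, if_true]
    constructor
    · intro he; exact absurd h (by simpa using he)
    · intro h1; exact absurd h1 (by decide)
  · simp [h, Nat.not_odd_iff_even.1 h]

lemma card_inter_cast (W S : Finset V) :
    ((W ∩ S).card : ZMod 2) = ∑ v ∈ W, (if v ∈ S then (1 : ZMod 2) else 0) := by
  rw [Finset.sum_boole, Finset.filter_mem_eq_inter]

lemma parity_symDiff (W A B : Finset V) :
    ((W ∩ symDiff A B).card : ZMod 2) = ((W ∩ A).card : ZMod 2) + ((W ∩ B).card : ZMod 2) := by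
  rw [card_inter_cast, card_inter_cast, card_inter_cast, ← Finset.sum_add_distrib]
  refine Finset.sum_congr rfl fun v _ => ?_
  by_cases ha : v ∈ A <;> by_cases hb : v ∈ B <;>
    simp [symDiff, Finset.mem_union, Finset.mem_sdiff, ha, hb] <;> decide

lemma mem_cutEdges_mk {G : SimpleGraph V} {W : Finset V} {a b : V}
    (ha : s(a, b) ∈ edgesOf G) :
    (s(a, b) ∈ cutEdges G W ↔ ((a ∈ W ∧ b ∉ W) ∨ (b ∈ W ∧ a ∉ W))) := by
  unfold cutEdges
  rw [Finset.mem_filter]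
  constructor
  · rintro ⟨-, u, v, huv, hu, hv⟩
    rcases Sym2.eq_iff.1 huv.symm with ⟨rfl, rfl⟩ | ⟨rfl, rfl⟩
    · exact Or.inl ⟨hu, hv⟩
    · exact Or.inr ⟨hu, hv⟩
  · rintro (⟨h1, h2⟩ | ⟨h1, h2⟩)
    · exact ⟨ha, a, b, rfl, h1, h2⟩
    · exact ⟨ha, b, a, Sym2.eq_swap, h1, h2⟩

lemma parity_cut (G : SimpleGraph V) (W : Finset V) (J : Finset (Sym2 V))
    (hJ : J ⊆ edgesOf G) :
    ((W ∩ oddVerts J).card : ZMod 2) = ((cutEdges G W ∩ J).card : ZMod 2) := by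
  have h1 : ((W ∩ oddVerts J).card : ZMod 2) = ∑ v ∈ W, ((degOn J v : ℕ) : ZMod 2) := by
    rw [card_inter_cast]
    refine Finset.sum_congr rfl fun v _ => ?_
    rw [natCast_zmod_two]
    simp [oddVerts]
  have h2 : ∀ v, ((degOn J v : ℕ) : ZMod 2) = ∑ e ∈ J, (if v ∈ e then (1 : ZMod 2) else 0) := by
    intro v
    unfold degOn
    rw [Finset.sum_boole]
  have h3 : ((cutEdges G W ∩ J).card : ZMod 2)
      = ∑ e ∈ J, (if e ∈ cutEdges G W then (1 : ZMod 2) else 0) := by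
    rw [Finset.sum_boole, Finset.filter_mem_eq_inter, Finset.inter_comm]
  rw [h1, h3]
  simp only [h2]
  rw [Finset.sum_comm]
  refine Finset.sum_congr rfl fun e he => ?_
  have heG : e ∈ G.edgeSet := by
    have := hJ he
    unfold edgesOf at this
    exact (Finset.mem_filter.1 this).2
  obtain ⟨a, b⟩ := e
  have hab : a ≠ b := by
    intro h
    exact G.not_isDiag_of_mem_edgeSet heG (by simp [h])
  have hcut := mem_cutEdges_mk (G := G) (W := W) (a := a) (b := b) (hJ he)
  have hmem : ∀ v : V, v ∈ (s(a, b) : Sym2 V) ↔ v = a ∨ v = b := fun v => Sym2.mem_iff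
  have hsum : ∑ v ∈ W, (if v ∈ (s(a, b) : Sym2 V) then (1 : ZMod 2) else 0)
      = (if a ∈ W then (1 : ZMod 2) else 0) + (if b ∈ W then (1 : ZMod 2) else 0) := by
    rw [Finset.sum_boole]
    have : W.filter (fun v => v ∈ (s(a, b) : Sym2 V))
        = W.filter (fun v => v = a) ∪ W.filter (fun v => v = b) := by
      rw [← Finset.filter_or]
      exact Finset.filter_congr fun v _ => by rw [hmem]
    rw [this, Finset.filter_eq', Finset.filter_eq']
    have hcard2 : (({a} ∪ {b} : Finset V)).card = 2 := by
      rw [Finset.card_union_of_disjoint (Finset.disjoint_singleton.2 hab)]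
      rfl
    by_cases ha : a ∈ W <;> by_cases hb : b ∈ W <;>
        simp [ha, hb, hab, hcard2] <;> decide
  have hcval : (if (s(a, b) : Sym2 V) ∈ cutEdges G W then (1 : ZMod 2) else 0)
      = if ((a ∈ W ∧ b ∉ W) ∨ (b ∈ W ∧ a ∉ W)) then 1 else 0 := by
    by_cases hc : ((a ∈ W ∧ b ∉ W) ∨ (b ∈ W ∧ a ∉ W)) <;> simp [hcut, hc]
  rw [hsum, hcval]
  by_cases ha : a ∈ W <;> by_cases hb : b ∈ W <;>
      simp [ha, hb] <;> decide

lemma walk_cross {H : SimpleGraph V} {W : Finset V} :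
    ∀ {a b : V}, H.Walk a b → a ∈ W → b ∉ W → ∃ x y, H.Adj x y ∧ x ∈ W ∧ y ∉ W
  | _, _, SimpleGraph.Walk.nil, ha, hb => absurd ha hb
  | _, _, SimpleGraph.Walk.cons (v := v) h q, ha, hb => by
    by_cases hv : v ∈ W
    · exact walk_cross q hv hb
    · exact ⟨_, _, h, ha, hv⟩

lemma tree_cross {G : SimpleGraph V} {F : Finset (Sym2 V)} {W : Finset V}
    (hFE : F ⊆ edgesOf G)
    (hconn : (SimpleGraph.fromEdgeSet (F : Set (Sym2 V))).Connected)
    (hW : W.Nonempty) (hWu : W ≠ Finset.univ) :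
    (cutEdges G W ∩ F).Nonempty := by
  obtain ⟨u, hu⟩ := hW
  have : ∃ v, v ∉ W := by
    by_contra h
    push_neg at h
    exact hWu (Finset.eq_univ_iff_forall.2 h)
  obtain ⟨v, hv⟩ := this
  obtain ⟨p⟩ := hconn.preconnected u v
  obtain ⟨x, y, hxy, hx, hy⟩ := walk_cross p hu hv
  rw [SimpleGraph.fromEdgeSet_adj] at hxy
  have hF : s(x, y) ∈ F := by exact_mod_cast hxy.1
  refine ⟨s(x, y), Finset.mem_inter.2 ⟨?_, hF⟩⟩
  exact (mem_cutEdges_mk (hFE hF)).2 (Or.inl ⟨hx, hy⟩)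

lemma double_count (C : Finset (Sym2 V)) (𝓕 : Finset (Finset (Sym2 V)))
    (lam : Finset (Sym2 V) → ℝ) :
    ∑ e ∈ C, ∑ F ∈ 𝓕.filter (fun F => e ∈ F), lam F
      = ∑ F ∈ 𝓕, lam F * ((C ∩ F).card : ℝ) := by
  simp only [Finset.sum_filter]
  rw [Finset.sum_comm]
  refine Finset.sum_congr rfl fun F _ => ?_
  have : ∀ e, (if e ∈ F then lam F else 0) = lam F * (if e ∈ F then (1 : ℝ) else 0) := by
    intro e; by_cases h : e ∈ F <;> simp [h]
  simp only [this]
  rw [← Finset.mul_sum, Finset.sum_boole, Finset.filter_mem_eq_inter]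

lemma xQ_total (C : Finset (Sym2 V)) (𝓕 : Finset (Finset (Sym2 V)))
    (lam : Finset (Sym2 V) → ℝ) :
    ∑ e ∈ C, xQ 𝓕 lam C e = ∑ F ∈ 𝓕.filter (fun F => (C ∩ F).card = 1), lam F := by
  unfold xQ
  simp only [Finset.sum_filter]
  rw [Finset.sum_comm]
  refine Finset.sum_congr rfl fun F _ => ?_
  by_cases h : (C ∩ F).card = 1
  · obtain ⟨e₀, he₀⟩ := Finset.card_eq_one.1 h
    have he₀C : e₀ ∈ C := (Finset.mem_inter.1 (he₀ ▸ Finset.mem_singleton_self e₀)).1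
    have : ∀ e, (C ∩ F = {e}) ↔ e₀ = e := by
      intro e
      rw [he₀, Finset.singleton_inj]
    simp only [this]
    rw [Finset.sum_ite_eq C e₀ (fun _ => lam F)]
    simp [he₀C, h]
  · rw [if_neg h]
    refine Finset.sum_eq_zero fun e _ => ?_
    rw [if_neg]
    intro hc
    exact h (by rw [hc]; simp)

lemma xQ_nonneg (𝓕 : Finset (Finset (Sym2 V))) (lam : Finset (Sym2 V) → ℝ)
    (hlam : ∀ F ∈ 𝓕, 0 < lam F) (C : Finset (Sym2 V)) (e : Sym2 V) :
    0 ≤ xQ 𝓕 lam C e :=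
  Finset.sum_nonneg fun F hF => (hlam F (Finset.mem_filter.1 hF).1).le

lemma sF_nonneg (G : SimpleGraph V) (xstar : Sym2 V → ℝ) (𝓕 : Finset (Finset (Sym2 V)))
    (lam : Finset (Sym2 V) → ℝ) (hlam : ∀ F ∈ 𝓕, 0 < lam F) (β : ℝ)
    (F : Finset (Sym2 V)) (e : Sym2 V) : 0 ≤ sF G xstar 𝓕 lam β F e :=
  Finset.sum_nonneg fun C _ => mul_nonneg (le_max_left _ _) (xQ_nonneg 𝓕 lam hlam C e)

lemma stmt13_cut (G : SimpleGraph V)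
    (T : Finset V)
    (xstar : Sym2 V → ℝ) (hxP : memP G T xstar)
    (𝓕 : Finset (Finset (Sym2 V))) (lam : Finset (Sym2 V) → ℝ)
    (h𝓕 : ∀ F ∈ 𝓕, IsSpanningTree G F) (hlam : ∀ F ∈ 𝓕, 0 < lam F)
    (hsum : ∑ F ∈ 𝓕, lam F = 1)
    (hdom : ∀ e ∈ edgesOf G, (∑ F ∈ 𝓕.filter (fun F => e ∈ F), lam F) ≤ xstar e)
    (β : ℝ) (hβ1 : 1 / 3 < β) (hβ2 : β < 1 / 2)
    (F : Finset (Sym2 V)) (hF : F ∈ 𝓕)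
    (W : Finset V) (hW : W.Nonempty) (hWu : W ≠ Finset.univ)
    (hodd : Odd ((W ∩ symDiff (oddVerts F) T).card)) :
    1 ≤ β * xval xstar (cutEdges G W) +
        (1 - 2 * β) * ((cutEdges G W ∩ F).card : ℝ) +
        xval (sF G xstar 𝓕 lam β F) (cutEdges G W) := by
  have hβ0 : (0:ℝ) ≤ β := by linarith
  have h2β : (0:ℝ) ≤ 1 - 2*β := by linarith
  obtain ⟨hFE, hFconn, -⟩ := h𝓕 F hF
  have hk1 : 1 ≤ (cutEdges G W ∩ F).card :=
    Finset.card_pos.2 (tree_cross hFE hFconn hW hWu)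
  have hs0 : 0 ≤ xval (sF G xstar 𝓕 lam β F) (cutEdges G W) :=
    Finset.sum_nonneg fun e _ => sF_nonneg G xstar 𝓕 lam hlam β F e
  rcases le_or_gt 2 (xval xstar (cutEdges G W)) with ht | ht
  · have hk1' : (1:ℝ) ≤ ((cutEdges G W ∩ F).card : ℝ) := by exact_mod_cast hk1
    have h1 := mul_le_mul_of_nonneg_left ht hβ0
    have h2 := mul_le_mul_of_nonneg_left hk1' h2β
    linarith
  · -- `xval xstar (cutEdges G W) < 2`
    have hTodd : Odd ((W ∩ T).card) := by
      by_contra h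
      rw [Nat.not_odd_iff_even] at h
      have := hxP.1 W hW hWu h
      linarith
    have hkeven : Even ((cutEdges G W ∩ F).card) := by
      have hpar := parity_cut G W F hFE
      have hsd := parity_symDiff W (oddVerts F) T
      have h1 : ((W ∩ symDiff (oddVerts F) T).card : ZMod 2) = 1 := (odd_iff_cast _).1 hodd
      have h2 : ((W ∩ T).card : ZMod 2) = 1 := (odd_iff_cast _).1 hTodd
      rw [h1, h2] at hsd
      have h3 : ((W ∩ oddVerts F).card : ZMod 2) = 0 := by
        have h5 : ((W ∩ oddVerts F).card : ZMod 2) + 1 = 0 + 1 := by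
          rw [zero_add]; exact hsd.symm
        exact add_right_cancel h5
      rw [even_iff_cast, ← hpar]
      exact h3
    have hk2 : 2 ≤ (cutEdges G W ∩ F).card := by
      obtain ⟨m, hm⟩ := hkeven; omega
    have hCQ : cutEdges G W ∈ (Qset G xstar).filter (fun C' => 2 ≤ (C' ∩ F).card) :=
      Finset.mem_filter.2 ⟨Finset.mem_filter.2
        ⟨Finset.mem_univ _, ⟨W, hW, hWu, rfl⟩, ht⟩, hk2⟩
    have hsub : cutEdges G W ⊆ edgesOf G := Finset.filter_subset _ _
    have hdc : ∑ F' ∈ 𝓕, lam F' * ((cutEdges G W ∩ F').card : ℝ)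
        ≤ xval xstar (cutEdges G W) := by
      rw [← double_count]
      exact Finset.sum_le_sum fun e he => hdom e (hsub he)
    have hp2 : 2 - xval xstar (cutEdges G W)
        ≤ ∑ F' ∈ 𝓕.filter (fun F' => (cutEdges G W ∩ F').card = 1), lam F' := by
      have hsplit : (∑ F' ∈ 𝓕.filter (fun F' => (cutEdges G W ∩ F').card = 1), lam F')
          + ∑ F' ∈ 𝓕.filter (fun F' => ¬ (cutEdges G W ∩ F').card = 1), lam F' = 1 := by
        rw [Finset.sum_filter_add_sum_filter_not]; exact hsum
      have hone : ∑ F' ∈ 𝓕.filter (fun F' => (cutEdges G W ∩ F').card = 1),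
          lam F' * ((cutEdges G W ∩ F').card : ℝ)
          = ∑ F' ∈ 𝓕.filter (fun F' => (cutEdges G W ∩ F').card = 1), lam F' := by
        refine Finset.sum_congr rfl fun F' hF' => ?_
        rw [(Finset.mem_filter.1 hF').2]
        simp
      have htwo : ∀ F' ∈ 𝓕.filter (fun F' => ¬ (cutEdges G W ∩ F').card = 1),
          2 * lam F' ≤ lam F' * ((cutEdges G W ∩ F').card : ℝ) := by
        intro F' hF'
        obtain ⟨hF'𝓕, hne⟩ := Finset.mem_filter.1 hF'
        obtain ⟨hFE', hconn', -⟩ := h𝓕 F' hF'𝓕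
        have h1 : 1 ≤ (cutEdges G W ∩ F').card :=
          Finset.card_pos.2 (tree_cross hFE' hconn' hW hWu)
        have h2 : (2:ℝ) ≤ ((cutEdges G W ∩ F').card : ℝ) := by
          exact_mod_cast (by omega : 2 ≤ (cutEdges G W ∩ F').card)
        calc 2 * lam F' = lam F' * 2 := mul_comm _ _
          _ ≤ lam F' * ((cutEdges G W ∩ F').card : ℝ) :=
            mul_le_mul_of_nonneg_left h2 (hlam F' hF'𝓕).le
      have hsum2 : ∑ F' ∈ 𝓕, lam F' * ((cutEdges G W ∩ F').card : ℝ)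
          = (∑ F' ∈ 𝓕.filter (fun F' => (cutEdges G W ∩ F').card = 1),
              lam F' * ((cutEdges G W ∩ F').card : ℝ))
          + ∑ F' ∈ 𝓕.filter (fun F' => ¬ (cutEdges G W ∩ F').card = 1),
              lam F' * ((cutEdges G W ∩ F').card : ℝ) :=
        (Finset.sum_filter_add_sum_filter_not _ _ _).symm
      have h3 : ∑ F' ∈ 𝓕.filter (fun F' => ¬ (cutEdges G W ∩ F').card = 1),
          2 * lam F'
          ≤ ∑ F' ∈ 𝓕.filter (fun F' => ¬ (cutEdges G W ∩ F').card = 1),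
            lam F' * ((cutEdges G W ∩ F').card : ℝ) :=
        Finset.sum_le_sum htwo
      rw [← Finset.mul_sum] at h3
      rw [hsum2, hone] at hdc
      linarith
    have hxQp : ∑ e ∈ cutEdges G W, xQ 𝓕 lam (cutEdges G W) e
        = ∑ F' ∈ 𝓕.filter (fun F' => (cutEdges G W ∩ F').card = 1), lam F' :=
      xQ_total (cutEdges G W) 𝓕 lam
    have hfQ0 : 0 ≤ fQ xstar β (cutEdges G W) := le_max_left _ _
    have hsC : xval (sF G xstar 𝓕 lam β F) (cutEdges G W)
        = ∑ Q ∈ (Qset G xstar).filter (fun C' => 2 ≤ (C' ∩ F).card),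
            fQ xstar β Q * ∑ e ∈ cutEdges G W, xQ 𝓕 lam Q e := by
      unfold xval sF
      rw [Finset.sum_comm]
      exact Finset.sum_congr rfl fun Q _ => (Finset.mul_sum _ _ _).symm
    have hsge : fQ xstar β (cutEdges G W) * ∑ e ∈ cutEdges G W, xQ 𝓕 lam (cutEdges G W) e
        ≤ xval (sF G xstar 𝓕 lam β F) (cutEdges G W) := by
      rw [hsC]
      exact Finset.single_le_sum
        (f := fun Q => fQ xstar β Q * ∑ e ∈ cutEdges G W, xQ 𝓕 lam Q e)
        (fun Q _ => mul_nonneg (le_max_left _ _)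
          (Finset.sum_nonneg fun e _ => xQ_nonneg 𝓕 lam hlam Q e)) hCQ
    have h2t : (0:ℝ) < 2 - xval xstar (cutEdges G W) := by linarith
    have hfval : 4*β - 1 - β * xval xstar (cutEdges G W)
        ≤ fQ xstar β (cutEdges G W) * (2 - xval xstar (cutEdges G W)) := by
      have heq : (4*β - 1 - β * xval xstar (cutEdges G W))
          = ((4 * β - 1 - β * xval xstar (cutEdges G W)) / (2 - xval xstar (cutEdges G W)))
            * (2 - xval xstar (cutEdges G W)) := (div_mul_cancel₀ _ h2t.ne').symm
      rw [heq]
      exact mul_le_mul_of_nonneg_right (le_max_right _ _) h2t.le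
    have hfmul : fQ xstar β (cutEdges G W) * (2 - xval xstar (cutEdges G W))
        ≤ fQ xstar β (cutEdges G W)
          * ∑ e ∈ cutEdges G W, xQ 𝓕 lam (cutEdges G W) e := by
      rw [hxQp]
      exact mul_le_mul_of_nonneg_left hp2 hfQ0
    have hk2' : (2:ℝ) ≤ ((cutEdges G W ∩ F).card : ℝ) := by exact_mod_cast hk2
    have hfin := mul_le_mul_of_nonneg_left hk2' h2β
    linarith

end Aux

/-- for every `β ∈ (1/3, 1/2)` and `F ∈ 𝓕`, the vector
`β x* + (1 - 2β) χ_F + s^F(β)` lies in `Q₊(G, T_F △ T)`. -/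
theorem stmt13 {V : Type*} [Fintype V] [DecidableEq V]
    (G : SimpleGraph V) (hG : G.Connected)
    (T : Finset V) (hT : Even T.card)
    (c : Sym2 V → ℝ) (hc : ∀ e, 0 ≤ c e)
    (xstar : Sym2 V → ℝ) (hxP : memP G T xstar)
    (hxmin : ∀ y : Sym2 V → ℝ, memP G T y → dotE G c xstar ≤ dotE G c y)
    (𝓕 : Finset (Finset (Sym2 V))) (lam : Finset (Sym2 V) → ℝ)
    (h𝓕 : ∀ F ∈ 𝓕, IsSpanningTree G F) (hlam : ∀ F ∈ 𝓕, 0 < lam F)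
    (hsum : ∑ F ∈ 𝓕, lam F = 1)
    (hdom : ∀ e ∈ edgesOf G, (∑ F ∈ 𝓕.filter (fun F => e ∈ F), lam F) ≤ xstar e)
    (β : ℝ) (hβ1 : 1 / 3 < β) (hβ2 : β < 1 / 2) :
    ∀ F ∈ 𝓕,
      memQplus G (symDiff (oddVerts F) T)
        (fun e => β * xstar e + (1 - 2 * β) * (if e ∈ F then (1 : ℝ) else 0) +
          sF G xstar 𝓕 lam β F e) ∧
      ∀ W : Finset V, W.Nonempty → W ≠ Finset.univ →
        Odd ((W ∩ symDiff (oddVerts F) T).card) →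
        1 ≤ β * xval xstar (cutEdges G W) +
            (1 - 2 * β) * ((cutEdges G W ∩ F).card : ℝ) +
            xval (sF G xstar 𝓕 lam β F) (cutEdges G W) := by
  intro F hF
  have hmain : ∀ W : Finset V, W.Nonempty → W ≠ Finset.univ →
      Odd ((W ∩ symDiff (oddVerts F) T).card) →
      1 ≤ β * xval xstar (cutEdges G W) +
          (1 - 2 * β) * ((cutEdges G W ∩ F).card : ℝ) +
          xval (sF G xstar 𝓕 lam β F) (cutEdges G W) :=
    fun W hW hWu hodd =>
      stmt13_cut G T xstar hxP 𝓕 lam h𝓕 hlam hsum hdom β hβ1 hβ2 F hF W hW hWu hodd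
  refine ⟨⟨?_, ?_⟩, hmain⟩
  · intro e he
    have h0 : 0 ≤ xstar e := ((hxP.2.2 e he)).1
    have hsF := sF_nonneg G xstar 𝓕 lam hlam β F e
    have hβ0 : (0:ℝ) ≤ β := by linarith
    have h2β : (0:ℝ) ≤ 1 - 2*β := by linarith
    have hind : 0 ≤ (1 - 2*β) * (if e ∈ F then (1:ℝ) else 0) :=
      mul_nonneg h2β (by split <;> norm_num)
    have hb : 0 ≤ β * xstar e := mul_nonneg hβ0 h0
    show 0 ≤ β * xstar e + (1 - 2 * β) * (if e ∈ F then (1:ℝ) else 0) +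
      sF G xstar 𝓕 lam β F e
    linarith
  · intro W hW hWu hodd
    have hmW := hmain W hW hWu hodd
    have hexp : xval (fun e => β * xstar e + (1 - 2 * β) * (if e ∈ F then (1 : ℝ) else 0) +
          sF G xstar 𝓕 lam β F e) (cutEdges G W)
        = β * xval xstar (cutEdges G W)
          + (1 - 2 * β) * ((cutEdges G W ∩ F).card : ℝ)
          + xval (sF G xstar 𝓕 lam β F) (cutEdges G W) := by
      unfold xval
      rw [Finset.sum_add_distrib, Finset.sum_add_distrib, ← Finset.mul_sum, ← Finset.mul_sum,
        Finset.sum_boole, Finset.filter_mem_eq_inter]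
    rw [hexp]
    exact hmW
end
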